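/- For every real number x > 0, the trigamma function satisfies ψ′(x + 1) > (7/30) · (2x + 1)(165x⁴ + 330x³ + 815x² + 650x + 417) / (77x⁶ + 231x⁵ + 560x⁴ + 735x³ + 623x² + 294x + 60). -/
import Mathlib

noncomputable def trigF (y : ℝ) : ℝ :=
  7 / 30 * ((2 * y + 1) * (165 * y ^ 4 + 330 * y ^ 3 + 815 * y ^ 2 + 650 * y + 417)) /
    (77 * y ^ 6 + 231 * y ^ 5 + 560 * y ^ 4 + 735 * y ^ 3 + 623 * y ^ 2 + 294 * y + 60)

lemma trigQ_pos (y : ℝ) (hy : 0 < y) :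
    0 < 77 * y ^ 6 + 231 * y ^ 5 + 560 * y ^ 4 + 735 * y ^ 3 + 623 * y ^ 2 + 294 * y + 60 := by
  positivity

lemma trigF_nonneg (y : ℝ) (hy : 0 < y) : 0 ≤ trigF y := by
  unfold trigF
  positivity

lemma trigF_le (y : ℝ) (hy : 0 < y) : trigF y ≤ 1 / y := by
  unfold trigF
  rw [div_le_div_iff₀ (trigQ_pos y hy) hy]
  nlinarith [pow_pos hy 2, pow_pos hy 3, pow_pos hy 4, pow_pos hy 5, pow_pos hy 6]

lemma trigF_anti (y : ℝ) (hy : 0 < y) : trigF (y + 1) ≤ trigF y := by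
  have h1 : (0:ℝ) < y + 1 := by linarith
  unfold trigF
  rw [div_le_div_iff₀ (trigQ_pos _ h1) (trigQ_pos _ hy)]
  nlinarith [pow_pos hy 2, pow_pos hy 3, pow_pos hy 4, pow_pos hy 5, pow_pos hy 6,
    pow_pos hy 7, pow_pos hy 8, pow_pos hy 9, pow_pos hy 10, pow_pos hy 11, pow_pos hy 12]

lemma trigF_key (y : ℝ) (hy : 0 < y) : trigF y - trigF (y + 1) < 1 / (y + 1) ^ 2 := by
  have h1 : (0:ℝ) < y + 1 := by linarith
  have hq := trigQ_pos y hy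
  have hq1 := trigQ_pos _ h1
  have hs : (0:ℝ) < (y + 1) ^ 2 := by positivity
  unfold trigF
  rw [div_sub_div _ _ (ne_of_gt hq) (ne_of_gt hq1), div_lt_div_iff₀ (by positivity) hs]
  ring_nf
  nlinarith [mul_pos hq hq1]

theorem trigamma_lower_bound' (x : ℝ) (hx : 0 < x) :
    (∑' n : ℕ, 1 / (x + 1 + (n : ℝ)) ^ 2) >
      7 / 30 * ((2 * x + 1) * (165 * x ^ 4 + 330 * x ^ 3 + 815 * x ^ 2 + 650 * x + 417)) /
        (77 * x ^ 6 + 231 * x ^ 5 + 560 * x ^ 4 + 735 * x ^ 3 + 623 * x ^ 2 + 294 * x + 60) := by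
  set g : ℕ → ℝ := fun n => 1 / (x + 1 + (n : ℝ)) ^ 2 with hg_def
  set d : ℕ → ℝ := fun n => trigF (x + n) - trigF (x + n + 1) with hd_def
  have hxn : ∀ n : ℕ, 0 < x + (n : ℝ) := fun n => by positivity
  -- g is summable
  have hg_sum : Summable g := by
    have h0 : Summable (fun n : ℕ => 1 / ((n : ℝ) + 1) ^ 2) := by
      have := (summable_nat_add_iff 1).mpr
        (Real.summable_one_div_nat_pow.mpr (by norm_num : 1 < 2))
      simpa using this
    refine Summable.of_nonneg_of_le (fun n => by positivity) (fun n => ?_) h0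
    apply one_div_le_one_div_of_le (by positivity)
    have : ((n : ℝ) + 1) ≤ x + 1 + n := by linarith [hx]
    nlinarith [this, (by positivity : (0:ℝ) < (n:ℝ) + 1)]
  -- termwise bounds
  have hd_nonneg : ∀ n : ℕ, 0 ≤ d n := fun n => sub_nonneg.mpr (trigF_anti _ (hxn n))
  have hd_le : ∀ n : ℕ, d n ≤ g n := by
    intro n
    have h := trigF_key (x + n) (hxn n)
    simpa [hd_def, hg_def, add_right_comm] using h.le
  have hd_sum : Summable d := Summable.of_nonneg_of_le hd_nonneg hd_le hg_sum
  -- tsum d = trigF x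
  have htel : ∀ N : ℕ, ∑ n ∈ Finset.range N, d n = trigF x - trigF (x + N) := by
    intro N
    have := Finset.sum_range_sub' (fun n : ℕ => trigF (x + n)) N
    simp only [Nat.cast_add, Nat.cast_one, Nat.cast_zero, add_zero] at this
    rw [← this]
    apply Finset.sum_congr rfl
    intro n _
    simp [hd_def]
    ring_nf
  have htend : Filter.Tendsto (fun N : ℕ => trigF (x + N)) Filter.atTop (nhds 0) := by
    apply squeeze_zero' (Filter.Eventually.of_forall fun n => trigF_nonneg _ (hxn n))
      ?_ tendsto_one_div_atTop_nhds_zero_nat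
    filter_upwards [Filter.eventually_ge_atTop 1] with n hn
    refine (trigF_le _ (hxn n)).trans (one_div_le_one_div_of_le ?_ ?_)
    · exact_mod_cast Nat.cast_pos.mpr hn
    · linarith [hx]
  have htsum : ∑' n, d n = trigF x := by
    have h1 : Filter.Tendsto (fun N : ℕ => ∑ n ∈ Finset.range N, d n) Filter.atTop
        (nhds (∑' n, d n)) := hd_sum.hasSum.tendsto_sum_nat
    have h2 : Filter.Tendsto (fun N : ℕ => ∑ n ∈ Finset.range N, d n) Filter.atTop
        (nhds (trigF x)) := by
      simp only [htel]
      simpa using (tendsto_const_nhds.sub htend)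
    exact tendsto_nhds_unique h1 h2
  have hstrict : d 0 < g 0 := by
    have := trigF_key x hx
    simpa [hd_def, hg_def] using this
  have hlt : ∑' n, d n < ∑' n, g n := Summable.tsum_lt_tsum hd_le hstrict hd_sum hg_sum
  rw [htsum] at hlt
  exact hlt
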